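/- arXiv:1702.03111 — 2 statements merged into one kernel-verified Lean document; each statement's English description precedes it below -/
import Mathlib

section
/- Suppose a ∈ C^∞(ℝ^d) is a Shubin symbol of order m with parameter ρ ∈ [0,1], i.e. |∂^α a(z)| ≤ C_α ⟨z⟩^{m-ρ|α|} for all multi-indices α. Then for any g ∈ 𝒮(ℝ^d)\{0} and all multi-indices α and all N ≥ 0 there exists C > 0 with |∂_x^α 𝒯_g a(x,ξ)| ≤ C ⟨x⟩^{m-ρ|α|} ⟨ξ⟩^{-N} for all (x,ξ) ∈ ℝ^{2d}. -/
noncomputable section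
open MeasureTheory Complex
open scoped RealInnerProductSpace BigOperators

/-- `ℝ^d` with the Euclidean structure. -/
abbrev E (d : ℕ) := EuclideanSpace ℝ (Fin d)

/-- The FBI-type transform `𝒯_g u`. -/
def Tg (d : ℕ) (g u : E d → ℂ) (x ξ : E d) : ℂ :=
  (((2 * Real.pi) ^ (-(d : ℝ) / 2) : ℝ) : ℂ) *
    ∫ y : E d, u y * Complex.exp (-Complex.I * ((⟪y - x, ξ⟫ : ℝ) : ℂ)) *
      (starRingEnd ℂ) (g (y - x))

/-- Partial derivative in the `i`-th coordinate direction. -/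
def pd (d : ℕ) (i : Fin d) (f : E d → ℂ) : E d → ℂ :=
  fun x => fderiv ℝ f x (EuclideanSpace.single i 1)

/-- Iterated partial derivatives along a list of coordinate indices
(a multi-index `∂^α`). -/
def pdL (d : ℕ) (L : List (Fin d)) (f : E d → ℂ) : E d → ℂ :=
  L.foldr (pd d) f

/-- Japanese bracket `⟨x⟩ = (1+|x|²)^{1/2}`. -/
def jbr {d : ℕ} (x : E d) : ℝ := Real.sqrt (1 + ‖x‖ ^ 2)

namespace ShubinAux
variable {d : ℕ}

lemma one_le_jbr (x : E d) : 1 ≤ jbr x := by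
  rw [jbr]
  exact Real.one_le_sqrt.mpr (by nlinarith [sq_nonneg ‖x‖])

lemma jbr_pos (x : E d) : 0 < jbr x := lt_of_lt_of_le one_pos (one_le_jbr x)

lemma jbr_neg (x : E d) : jbr (-x) = jbr x := by simp [jbr]

lemma jbr_le (x : E d) : jbr x ≤ 1 + ‖x‖ := by
  rw [jbr]
  have : (1 : ℝ) + ‖x‖ ^ 2 ≤ (1 + ‖x‖) ^ 2 := by
    have := norm_nonneg x; nlinarith
  calc Real.sqrt (1 + ‖x‖ ^ 2) ≤ Real.sqrt ((1 + ‖x‖) ^ 2) := Real.sqrt_le_sqrt this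
    _ = 1 + ‖x‖ := by rw [Real.sqrt_sq (by positivity)]

lemma jbr_add_le (x y : E d) : jbr (x + y) ≤ Real.sqrt 2 * jbr x * jbr y := by
  rw [jbr, jbr, jbr, ← Real.sqrt_mul (by norm_num), ← Real.sqrt_mul (by positivity)]
  apply Real.sqrt_le_sqrt
  have h : ‖x + y‖ ≤ ‖x‖ + ‖y‖ := norm_add_le x y
  have h2 : ‖x + y‖ ^ 2 ≤ (‖x‖ + ‖y‖) ^ 2 := by
    apply sq_le_sq' _ h; have := norm_nonneg (x + y); nlinarith [norm_nonneg x, norm_nonneg y]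
  nlinarith [norm_nonneg x, norm_nonneg y, sq_nonneg (‖x‖ - ‖y‖), sq_nonneg (‖x‖ * ‖y‖)]

lemma sqrt_two_le_two : Real.sqrt 2 ≤ 2 := by
  have h4 : Real.sqrt 4 = 2 := by
    rw [show (4:ℝ) = 2^2 by norm_num, Real.sqrt_sq (by norm_num : (0:ℝ) ≤ 2)]
  calc Real.sqrt 2 ≤ Real.sqrt 4 := Real.sqrt_le_sqrt (by norm_num)
    _ = 2 := h4

/-- Peetre's inequality, crude form. -/
lemma jbr_peetre (s : ℝ) (x y : E d) :
    jbr (x + y) ^ s ≤ 2 ^ |s| * (jbr x ^ s * jbr y ^ |s|) := by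
  rcases le_or_gt 0 s with hs | hs
  · rw [_root_.abs_of_nonneg hs]
    calc jbr (x + y) ^ s ≤ (Real.sqrt 2 * jbr x * jbr y) ^ s := by
          apply Real.rpow_le_rpow (jbr_pos _).le (jbr_add_le x y) hs
      _ ≤ (2 * jbr x * jbr y) ^ s := by
          apply Real.rpow_le_rpow
            (mul_nonneg (mul_nonneg (Real.sqrt_nonneg 2) (jbr_pos x).le) (jbr_pos y).le)
            (by nlinarith [sqrt_two_le_two, jbr_pos x, jbr_pos y,
              mul_pos (jbr_pos x) (jbr_pos y)]) hs
      _ = 2 ^ s * (jbr x ^ s * jbr y ^ s) := by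
          rw [Real.mul_rpow (mul_nonneg (by norm_num) (jbr_pos x).le) (jbr_pos y).le,
            Real.mul_rpow (by norm_num) (jbr_pos x).le, mul_assoc]
  · rw [_root_.abs_of_neg hs]
    have h2 : jbr x ≤ 2 * (jbr (x + y) * jbr y) := by
      have h := jbr_add_le (x + y) (-y)
      simp only [add_neg_cancel_right, jbr_neg] at h
      have hAC : (0:ℝ) ≤ jbr (x+y) * jbr y :=
        mul_nonneg (jbr_pos _).le (jbr_pos _).le
      calc jbr x ≤ Real.sqrt 2 * jbr (x + y) * jbr y := h
        _ = Real.sqrt 2 * (jbr (x + y) * jbr y) := by ring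
        _ ≤ 2 * (jbr (x + y) * jbr y) := mul_le_mul_of_nonneg_right sqrt_two_le_two hAC
    have hx : jbr x ^ s ≥ (2 * (jbr (x + y) * jbr y)) ^ s :=
      Real.rpow_le_rpow_of_nonpos (jbr_pos x) h2 hs.le
    have hexp : (2 * (jbr (x + y) * jbr y)) ^ s
        = jbr (x + y) ^ s * (2 ^ s * jbr y ^ s) := by
      rw [Real.mul_rpow (by norm_num) (mul_nonneg (jbr_pos _).le (jbr_pos _).le),
        Real.mul_rpow (jbr_pos _).le (jbr_pos _).le]
      ring
    -- target : jbr (x+y) ^ s ≤ 2 ^ (-s) * (jbr x ^ s * jbr y ^ (-s))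
    have h2s : (0:ℝ) < 2 ^ s * jbr y ^ s :=
      mul_pos (Real.rpow_pos_of_pos (by norm_num) s) (Real.rpow_pos_of_pos (jbr_pos y) s)
    rw [hexp] at hx
    calc jbr (x + y) ^ s ≤ jbr x ^ s / (2 ^ s * jbr y ^ s) := (le_div_iff₀ h2s).mpr hx
      _ = 2 ^ (-s) * (jbr x ^ s * jbr y ^ (-s)) := by
          rw [Real.rpow_neg (by norm_num), Real.rpow_neg (jbr_pos _).le]
          field_simp

lemma jbr_rpow_le_npow (s : ℝ) (x : E d) :
    jbr x ^ s ≤ (1 + ‖x‖) ^ (⌈s⌉₊ : ℕ) := by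
  calc jbr x ^ s ≤ jbr x ^ ((⌈s⌉₊ : ℕ) : ℝ) :=
        Real.rpow_le_rpow_of_exponent_le (one_le_jbr x) (Nat.le_ceil s)
    _ = jbr x ^ (⌈s⌉₊ : ℕ) := Real.rpow_natCast _ _
    _ ≤ (1 + ‖x‖) ^ (⌈s⌉₊ : ℕ) := pow_le_pow_left₀ (jbr_pos x).le (jbr_le x) _

lemma one_add_pow_le (t : ℝ) (ht : 0 ≤ t) (n : ℕ) :
    (1 + t) ^ n ≤ 2 ^ n * (1 + t ^ n) := by
  have h : 1 + t ≤ 2 * max 1 t := by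
    rcases le_total t 1 with h | h
    · rw [max_eq_left h]; linarith
    · rw [max_eq_right h]; linarith
  calc (1 + t) ^ n ≤ (2 * max 1 t) ^ n := pow_le_pow_left₀ (by linarith) h n
    _ = 2 ^ n * (max 1 t) ^ n := mul_pow _ _ _
    _ ≤ 2 ^ n * (1 + t ^ n) := by
        apply mul_le_mul_of_nonneg_left _ (by positivity)
        rcases le_total t 1 with h | h
        · rw [max_eq_left h]; simp; positivity
        · rw [max_eq_right h]
          have : t ^ n ≤ 1 + t ^ n := by linarith [pow_nonneg ht n]
          linarith

/-! ### `pd`/`pdL` basics -/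

lemma pdL_nil (f : E d → ℂ) : pdL d [] f = f := rfl

lemma pdL_cons (i : Fin d) (L : List (Fin d)) (f : E d → ℂ) :
    pdL d (i :: L) f = pd d i (pdL d L f) := rfl

lemma pdL_append (L₁ L₂ : List (Fin d)) (f : E d → ℂ) :
    pdL d (L₁ ++ L₂) f = pdL d L₁ (pdL d L₂ f) := by
  simp [pdL, List.foldr_append]

lemma contDiff_pd (i : Fin d) {f : E d → ℂ} (hf : ContDiff ℝ (⊤ : ℕ∞) f) :
    ContDiff ℝ (⊤ : ℕ∞) (pd d i f) :=
  (hf.fderiv_right (le_refl _)).clm_apply contDiff_const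

lemma contDiff_pdL (L : List (Fin d)) {f : E d → ℂ} (hf : ContDiff ℝ (⊤ : ℕ∞) f) :
    ContDiff ℝ (⊤ : ℕ∞) (pdL d L f) := by
  induction L with
  | nil => exact hf
  | cons i L ih => exact contDiff_pd i ih

/-! ### Multilinear estimates -/

lemma eucl_decomp (v : E d) : v = ∑ j, v j • EuclideanSpace.single j (1:ℝ) := by
  have h := (EuclideanSpace.basisFun (Fin d) ℝ).sum_repr v
  simp only [EuclideanSpace.basisFun_apply, EuclideanSpace.basisFun_repr] at h
  exact h.symm

lemma abs_coord_le_norm (x : E d) (i : Fin d) : |x i| ≤ ‖x‖ := by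
  rw [EuclideanSpace.norm_eq, ← Real.sqrt_sq_eq_abs]
  apply Real.sqrt_le_sqrt
  calc x i ^ 2 = ‖x i‖ ^ 2 := by rw [Real.norm_eq_abs, _root_.sq_abs]
    _ ≤ ∑ j, ‖x j‖ ^ 2 := Finset.single_le_sum (f := fun j => ‖x j‖ ^ 2)
        (fun j _ => by positivity) (Finset.mem_univ i)

lemma multilinear_norm_le {n : ℕ} (M : ContinuousMultilinearMap ℝ (fun _ : Fin n => E d) ℂ) :
    ‖M‖ ≤ ∑ ι : Fin n → Fin d, ‖M (fun k => EuclideanSpace.single (ι k) 1)‖ := by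
  apply ContinuousMultilinearMap.opNorm_le_bound
    (Finset.sum_nonneg fun _ _ => norm_nonneg _)
  intro v
  have hrw : M v = ∑ ι : Fin n → Fin d,
      (∏ k, v k (ι k)) • M (fun k => EuclideanSpace.single (ι k) 1) := by
    conv_lhs => rw [show v = fun k => ∑ j, v k j • EuclideanSpace.single j (1:ℝ) from
      funext fun k => eucl_decomp (v k)]
    rw [show (M (fun k => ∑ j, v k j • EuclideanSpace.single j (1:ℝ)))
        = ∑ r : Fin n → Fin d, M (fun k => v k (r k) • EuclideanSpace.single (r k) (1:ℝ)) from
      M.toMultilinearMap.map_sum (fun k j => v k j • EuclideanSpace.single j (1:ℝ))]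
    refine Finset.sum_congr rfl fun r _ => ?_
    exact M.toMultilinearMap.map_smul_univ (fun k => v k (r k))
      (fun k => EuclideanSpace.single (r k) (1:ℝ))
  rw [hrw]
  refine (norm_sum_le _ _).trans ?_
  rw [Finset.sum_mul]
  apply Finset.sum_le_sum
  intro ι _
  rw [norm_smul]
  rw [mul_comm (‖M fun k => EuclideanSpace.single (ι k) 1‖) (∏ k, ‖v k‖)]
  apply mul_le_mul_of_nonneg_right _ (norm_nonneg _)
  calc ‖∏ k, v k (ι k)‖ = ∏ k, |v k (ι k)| := by
        rw [Real.norm_eq_abs, Finset.abs_prod]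
    _ ≤ ∏ k, ‖v k‖ := Finset.prod_le_prod (fun k _ => abs_nonneg _)
        (fun k _ => abs_coord_le_norm (v k) (ι k))

lemma iFD_basis {f : E d → ℂ} (hf : ContDiff ℝ (⊤:ℕ∞) f) (n : ℕ) :
    ∀ (ι : Fin n → Fin d) (z : E d),
      iteratedFDeriv ℝ n f z (fun k => EuclideanSpace.single (ι k) 1)
        = pdL d (List.ofFn ι) f z := by
  induction n with
  | zero => intro ι z; simp [pdL]
  | succ n ih =>
    intro ι z
    rw [iteratedFDeriv_succ_apply_left]
    have hdiff : DifferentiableAt ℝ (fun z => iteratedFDeriv ℝ n f z) z := by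
      have : ContDiff ℝ 1 (iteratedFDeriv ℝ n f) :=
        hf.iteratedFDeriv_right (by exact_mod_cast le_top)
      exact (this.differentiable one_ne_zero).differentiableAt
    have key := fderiv_continuousMultilinear_apply_const_apply hdiff
      (fun k : Fin n => EuclideanSpace.single (ι k.succ) (1:ℝ))
      (EuclideanSpace.single (ι 0) (1:ℝ))
    have h1 : (fun z => iteratedFDeriv ℝ n f z
        (fun k : Fin n => EuclideanSpace.single (ι k.succ) (1:ℝ)))
        = pdL d (List.ofFn (fun k => ι k.succ)) f := funext fun z => ih _ z
    rw [List.ofFn_succ, pdL_cons, pd, ← h1, key]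
    rfl

lemma norm_iFD_le_sum {f : E d → ℂ} (hf : ContDiff ℝ (⊤:ℕ∞) f) (n : ℕ) (z : E d) :
    ‖iteratedFDeriv ℝ n f z‖ ≤
      ∑ ι : Fin n → Fin d, ‖pdL d (List.ofFn ι) f z‖ := by
  refine (multilinear_norm_le _).trans (le_of_eq ?_)
  refine Finset.sum_congr rfl fun ι _ => ?_
  rw [iFD_basis hf n ι z]

lemma norm_fderiv_le_sum {f : E d → ℂ} (z : E d) :
    ‖fderiv ℝ f z‖ ≤ ∑ i : Fin d, ‖pd d i f z‖ := by
  apply ContinuousLinearMap.opNorm_le_bound _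
    (Finset.sum_nonneg fun _ _ => norm_nonneg _)
  intro v
  conv_lhs => rw [show v = ∑ j, v j • EuclideanSpace.single j (1:ℝ) from eucl_decomp v]
  rw [map_sum]
  refine (norm_sum_le _ _).trans ?_
  rw [Finset.sum_mul]
  apply Finset.sum_le_sum
  intro j _
  rw [ContinuousLinearMap.map_smul, norm_smul, Real.norm_eq_abs]
  calc |v j| * ‖fderiv ℝ f z (EuclideanSpace.single j 1)‖
      ≤ ‖v‖ * ‖fderiv ℝ f z (EuclideanSpace.single j 1)‖ :=
        mul_le_mul_of_nonneg_right (abs_coord_le_norm v j) (norm_nonneg _)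
    _ = ‖pd d j f z‖ * ‖v‖ := by
        rw [mul_comm]; rfl

/-! ### Symbol bounds and translations -/

/-- All iterated coordinate derivatives are bounded by a fixed power of the bracket. -/
def SymB (d : ℕ) (b : E d → ℂ) (s : ℝ) : Prop :=
  ∀ L : List (Fin d), ∃ C : ℝ, 0 ≤ C ∧ ∀ z : E d,
    ‖pdL d L b z‖ ≤ C * jbr z ^ s

lemma SymB.pdL {b : E d → ℂ} {s : ℝ} (h : SymB d b s) (L : List (Fin d)) :
    SymB d (pdL d L b) s := fun L' => by
  obtain ⟨C, hC0, hC⟩ := h (L' ++ L)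
  exact ⟨C, hC0, fun z => by rw [← pdL_append]; exact hC z⟩

lemma contDiff_shift {b : E d → ℂ} (hb : ContDiff ℝ (⊤:ℕ∞) b) (x : E d) :
    ContDiff ℝ (⊤:ℕ∞) (fun y => b (y + x)) :=
  hb.comp (contDiff_id.add contDiff_const)

lemma hasFDerivAt_shift {b : E d → ℂ} (hb : ContDiff ℝ (⊤:ℕ∞) b) (y x : E d) :
    HasFDerivAt (fun x' => b (y + x')) (fderiv ℝ b (y + x)) x := by
  have h1 : HasFDerivAt (fun x' : E d => y + x') (ContinuousLinearMap.id ℝ (E d)) x :=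
    (hasFDerivAt_id x).const_add y
  have h2 : HasFDerivAt b (fderiv ℝ b (y + x)) (y + x) :=
    ((hb.differentiable (by simp)) (y + x)).hasFDerivAt
  exact h2.comp x h1

lemma pd_shift {b : E d → ℂ} (hb : ContDiff ℝ (⊤:ℕ∞) b) (x : E d) (i : Fin d) :
    pd d i (fun y => b (y + x)) = fun y => pd d i b (y + x) := by
  funext y
  have h1 : HasFDerivAt (fun y' : E d => y' + x) (ContinuousLinearMap.id ℝ (E d)) y :=
    (hasFDerivAt_id y).add_const x
  have h2 : HasFDerivAt b (fderiv ℝ b (y + x)) (y + x) :=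
    ((hb.differentiable (by simp)) (y + x)).hasFDerivAt
  have h3 : HasFDerivAt (fun y' => b (y' + x)) (fderiv ℝ b (y + x)) y := by
    exact h2.comp y h1
  rw [pd, h3.fderiv]; rfl

lemma pdL_shift {b : E d → ℂ} (hb : ContDiff ℝ (⊤:ℕ∞) b) (x : E d) (L : List (Fin d)) :
    pdL d L (fun y => b (y + x)) = fun y => pdL d L b (y + x) := by
  induction L with
  | nil => rfl
  | cons i L ih =>
    rw [pdL_cons, ih, pd_shift (contDiff_pdL L hb) x i, pdL_cons]

/-- if `1 ≤ t ≤ T` then `t ^ s ≤ T ^ ⌈|s|⌉₊`. -/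
lemma rpow_le_of_base_le {t T s : ℝ} (h1 : 1 ≤ t) (h2 : t ≤ T) :
    t ^ s ≤ T ^ (⌈|s|⌉₊ : ℕ) := by
  have hT : (1:ℝ) ≤ T := le_trans h1 h2
  rcases le_or_gt 0 s with hs | hs
  · calc t ^ s ≤ T ^ s := Real.rpow_le_rpow (by linarith) h2 hs
      _ ≤ T ^ ((⌈|s|⌉₊ : ℕ) : ℝ) := Real.rpow_le_rpow_of_exponent_le hT
          (le_trans (le_abs_self s) (Nat.le_ceil _))
      _ = T ^ (⌈|s|⌉₊ : ℕ) := Real.rpow_natCast _ _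
  · calc t ^ s ≤ t ^ (0:ℝ) := Real.rpow_le_rpow_of_exponent_le h1 hs.le
      _ = 1 := Real.rpow_zero t
      _ ≤ T ^ (⌈|s|⌉₊ : ℕ) := one_le_pow₀ hT

/-! ### Integrability helpers -/

lemma integrable_weight (g : SchwartzMap (E d) ℂ) (p : ℕ) :
    Integrable (fun y : E d => (1 + ‖y‖) ^ p * ‖g y‖) := by
  have h1 : Integrable (fun y : E d => ‖y‖ ^ (0:ℕ) * ‖g y‖) := g.integrable_pow_mul volume 0
  have h2 : Integrable (fun y : E d => ‖y‖ ^ p * ‖g y‖) := g.integrable_pow_mul volume p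
  have h3 : Integrable (fun y : E d =>
      (2:ℝ) ^ p * (‖y‖ ^ (0:ℕ) * ‖g y‖ + ‖y‖ ^ p * ‖g y‖)) := ((h1.add h2).const_mul _)
  apply h3.mono'
  · apply Continuous.aestronglyMeasurable
    exact ((continuous_const.add continuous_norm).pow p).mul g.continuous.norm
  · refine Filter.Eventually.of_forall fun y => ?_
    rw [Real.norm_eq_abs, _root_.abs_of_nonneg (by positivity)]
    have h4 : (1 + ‖y‖) ^ p ≤ 2 ^ p * (1 + ‖y‖ ^ p) := one_add_pow_le ‖y‖ (norm_nonneg y) p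
    have h5 : (0:ℝ) ≤ ‖g y‖ := norm_nonneg _
    calc (1 + ‖y‖) ^ p * ‖g y‖ ≤ (2 ^ p * (1 + ‖y‖ ^ p)) * ‖g y‖ :=
          mul_le_mul_of_nonneg_right h4 h5
      _ = 2 ^ p * (‖y‖ ^ (0:ℕ) * ‖g y‖ + ‖y‖ ^ p * ‖g y‖) := by ring

/-- Integrability of a function dominated by `poly × schwartz`. -/
lemma integrable_of_poly_schwartz (f : E d → ℂ) (hf : AEStronglyMeasurable f volume)
    (g : SchwartzMap (E d) ℂ) (C : ℝ) (p : ℕ)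
    (h : ∀ y, ‖f y‖ ≤ C * ((1 + ‖y‖) ^ p * ‖g y‖)) :
    Integrable f := by
  apply ((integrable_weight g p).const_mul C).mono' hf
  refine Filter.Eventually.of_forall fun y => ?_
  have := h y
  exact this

/-! ### The Schwartz bound for `y ↦ b (y+x) * conj (g y)` -/

lemma key_pointwise {b : E d → ℂ} (hb : ContDiff ℝ (⊤:ℕ∞) b) {s : ℝ} (hSB : SymB d b s)
    (g : SchwartzMap (E d) ℂ) (k n : ℕ) :
    ∃ D : ℝ, 0 ≤ D ∧ ∀ (x y : E d),
      ‖y‖ ^ k * ‖iteratedFDeriv ℝ n (fun y' => b (y' + x) * (starRingEnd ℂ) (g y')) y‖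
        ≤ D * jbr x ^ s := by
  choose Cf hCf0 hCf using hSB
  set p : ℕ := ⌈|s|⌉₊ with hp
  set B : ℕ → ℝ := fun i => ∑ ι : Fin i → Fin d, Cf (List.ofFn ι) with hB
  have hB0 : ∀ i, 0 ≤ B i := fun i => Finset.sum_nonneg fun ι _ => hCf0 _
  set G : ℕ → ℝ := fun j =>
    SchwartzMap.seminorm ℝ k j g + SchwartzMap.seminorm ℝ (k + p) j g with hG
  have hG0 : ∀ j, 0 ≤ G j := fun j => add_nonneg (apply_nonneg _ _) (apply_nonneg _ _)
  refine ⟨∑ i ∈ Finset.range (n+1),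
      (n.choose i : ℝ) * (B i * 2 ^ |s|) * (2 ^ p * G (n - i)), ?_, ?_⟩
  · apply Finset.sum_nonneg; intro i _
    have h1 := hB0 i; have h2 := hG0 (n - i)
    have h3 : (0:ℝ) ≤ (2:ℝ) ^ |s| := (Real.rpow_pos_of_pos two_pos _).le
    positivity
  intro x y
  have hjx : (0:ℝ) < jbr x ^ s := Real.rpow_pos_of_pos (jbr_pos x) s
  have hf1 : ContDiff ℝ (⊤:ℕ∞) (fun y' => b (y' + x)) := contDiff_shift hb x
  have hf2 : ContDiff ℝ (⊤:ℕ∞) (fun y' => (starRingEnd ℂ) (g y')) :=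
    Complex.conjCLE.contDiff.comp (g.smooth ⊤)
  have hmul := norm_iteratedFDeriv_mul_le (𝕜 := ℝ) (A := ℂ) hf1 hf2 y
    (by exact_mod_cast le_top : (n : WithTop ℕ∞) ≤ ((⊤:ℕ∞) : WithTop ℕ∞))
  have h1 : ∀ i : ℕ, ‖iteratedFDeriv ℝ i (fun y' => b (y' + x)) y‖
      ≤ B i * 2 ^ |s| * (jbr x ^ s * jbr y ^ |s|) := by
    intro i
    refine (norm_iFD_le_sum hf1 i y).trans ?_
    have hterm : ∀ ι : Fin i → Fin d,
        ‖pdL d (List.ofFn ι) (fun y' => b (y' + x)) y‖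
          ≤ Cf (List.ofFn ι) * (2 ^ |s| * (jbr x ^ s * jbr y ^ |s|)) := by
      intro ι
      rw [pdL_shift hb x]
      have h := hCf (List.ofFn ι) (y + x)
      have hpe : jbr (y + x) ^ s ≤ 2 ^ |s| * (jbr x ^ s * jbr y ^ |s|) := by
        rw [add_comm]; exact jbr_peetre s x y
      calc ‖pdL d (List.ofFn ι) b (y + x)‖
          ≤ Cf (List.ofFn ι) * jbr (y+x) ^ s := h
        _ ≤ Cf (List.ofFn ι) * (2 ^ |s| * (jbr x ^ s * jbr y ^ |s|)) :=
            mul_le_mul_of_nonneg_left hpe (hCf0 _)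
    calc (∑ ι : Fin i → Fin d, ‖pdL d (List.ofFn ι) (fun y' => b (y' + x)) y‖)
        ≤ ∑ ι : Fin i → Fin d, Cf (List.ofFn ι) * (2 ^ |s| * (jbr x ^ s * jbr y ^ |s|)) :=
          Finset.sum_le_sum fun ι _ => hterm ι
      _ = B i * 2 ^ |s| * (jbr x ^ s * jbr y ^ |s|) := by
          rw [hB, ← Finset.sum_mul]; ring
  have h2 : ∀ j : ℕ, ‖iteratedFDeriv ℝ j (fun y' => (starRingEnd ℂ) (g y')) y‖
      = ‖iteratedFDeriv ℝ j (⇑g) y‖ := by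
    intro j
    have := Complex.conjLIE.norm_iteratedFDeriv_comp_left (⇑g) y j
    simpa [Function.comp_def, Complex.conjLIE_apply] using this
  have hy : jbr y ^ |s| ≤ 2 ^ p * (1 + ‖y‖ ^ p) :=
    (jbr_rpow_le_npow |s| y).trans (one_add_pow_le ‖y‖ (norm_nonneg y) p)
  have hg2 : ∀ j : ℕ, jbr y ^ |s| * (‖y‖ ^ k * ‖iteratedFDeriv ℝ j (⇑g) y‖) ≤ 2 ^ p * G j := by
    intro j
    have hX0 : (0:ℝ) ≤ ‖y‖ ^ k * ‖iteratedFDeriv ℝ j (⇑g) y‖ := by positivity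
    have hXa : ‖y‖ ^ k * ‖iteratedFDeriv ℝ j (⇑g) y‖ ≤ SchwartzMap.seminorm ℝ k j g :=
      SchwartzMap.le_seminorm ℝ k j g y
    have heq : ‖y‖ ^ p * (‖y‖ ^ k * ‖iteratedFDeriv ℝ j (⇑g) y‖)
        = ‖y‖ ^ (k + p) * ‖iteratedFDeriv ℝ j (⇑g) y‖ := by rw [pow_add]; ring
    have hXb : ‖y‖ ^ p * (‖y‖ ^ k * ‖iteratedFDeriv ℝ j (⇑g) y‖)
        ≤ SchwartzMap.seminorm ℝ (k + p) j g := by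
      rw [heq]; exact SchwartzMap.le_seminorm ℝ (k + p) j g y
    calc jbr y ^ |s| * (‖y‖ ^ k * ‖iteratedFDeriv ℝ j (⇑g) y‖)
        ≤ (2 ^ p * (1 + ‖y‖ ^ p)) * (‖y‖ ^ k * ‖iteratedFDeriv ℝ j (⇑g) y‖) :=
          mul_le_mul_of_nonneg_right hy hX0
      _ = 2 ^ p * ((‖y‖ ^ k * ‖iteratedFDeriv ℝ j (⇑g) y‖)
            + ‖y‖ ^ p * (‖y‖ ^ k * ‖iteratedFDeriv ℝ j (⇑g) y‖)) := by ring
      _ ≤ 2 ^ p * G j := by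
          apply mul_le_mul_of_nonneg_left _ (by positivity)
          rw [hG]; exact add_le_add hXa hXb
  calc ‖y‖ ^ k * ‖iteratedFDeriv ℝ n (fun y' => b (y' + x) * (starRingEnd ℂ) (g y')) y‖
      ≤ ‖y‖ ^ k * ∑ i ∈ Finset.range (n + 1), (n.choose i : ℝ)
          * ‖iteratedFDeriv ℝ i (fun y' => b (y' + x)) y‖
          * ‖iteratedFDeriv ℝ (n - i) (fun y' => (starRingEnd ℂ) (g y')) y‖ :=
        mul_le_mul_of_nonneg_left hmul (by positivity)
    _ = ∑ i ∈ Finset.range (n + 1), (n.choose i : ℝ)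
          * ‖iteratedFDeriv ℝ i (fun y' => b (y' + x)) y‖
          * (‖y‖ ^ k * ‖iteratedFDeriv ℝ (n - i) (⇑g) y‖) := by
        rw [Finset.mul_sum]
        refine Finset.sum_congr rfl fun i _ => ?_
        rw [h2]; ring
    _ ≤ ∑ i ∈ Finset.range (n + 1), (n.choose i : ℝ)
          * (B i * 2 ^ |s| * (jbr x ^ s * jbr y ^ |s|))
          * (‖y‖ ^ k * ‖iteratedFDeriv ℝ (n - i) (⇑g) y‖) := by
        refine Finset.sum_le_sum fun i _ => ?_
        apply mul_le_mul_of_nonneg_right _ (by positivity)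
        exact mul_le_mul_of_nonneg_left (h1 i) (by positivity)
    _ = ∑ i ∈ Finset.range (n + 1), ((n.choose i : ℝ) * (B i * 2 ^ |s|)
          * (jbr y ^ |s| * (‖y‖ ^ k * ‖iteratedFDeriv ℝ (n - i) (⇑g) y‖))) * jbr x ^ s := by
        refine Finset.sum_congr rfl fun i _ => ?_; ring
    _ ≤ ∑ i ∈ Finset.range (n + 1), ((n.choose i : ℝ) * (B i * 2 ^ |s|)
          * (2 ^ p * G (n - i))) * jbr x ^ s := by
        refine Finset.sum_le_sum fun i _ => ?_
        apply mul_le_mul_of_nonneg_right _ hjx.le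
        apply mul_le_mul_of_nonneg_left (hg2 (n - i))
        have h3 : (0:ℝ) ≤ (2:ℝ) ^ |s| := (Real.rpow_pos_of_pos two_pos _).le
        have h4 := hB0 i
        positivity
    _ = (∑ i ∈ Finset.range (n+1),
          (n.choose i : ℝ) * (B i * 2 ^ |s|) * (2 ^ p * G (n - i))) * jbr x ^ s := by
        rw [Finset.sum_mul]

/-- The Schwartz map `y ↦ b (y+x) * conj (g y)`. -/
def mkF {b : E d → ℂ} (hb : ContDiff ℝ (⊤:ℕ∞) b) {s : ℝ} (hSB : SymB d b s)
    (g : SchwartzMap (E d) ℂ) (x : E d) : SchwartzMap (E d) ℂ where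
  toFun := fun y => b (y + x) * (starRingEnd ℂ) (g y)
  smooth' := (contDiff_shift hb x).mul (Complex.conjCLE.contDiff.comp (g.smooth ⊤))
  decay' := by
    intro k n
    obtain ⟨D, _, hD⟩ := key_pointwise hb hSB g k n
    exact ⟨D * jbr x ^ s, fun y => hD x y⟩

@[simp] lemma mkF_apply {b : E d → ℂ} (hb : ContDiff ℝ (⊤:ℕ∞) b) {s : ℝ} (hSB : SymB d b s)
    (g : SchwartzMap (E d) ℂ) (x y : E d) :
    mkF hb hSB g x y = b (y + x) * (starRingEnd ℂ) (g y) := rfl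

lemma mkF_seminorm_le {b : E d → ℂ} (hb : ContDiff ℝ (⊤:ℕ∞) b) {s : ℝ} (hSB : SymB d b s)
    (g : SchwartzMap (E d) ℂ) (k n : ℕ) :
    ∃ D : ℝ, 0 ≤ D ∧ ∀ x : E d,
      SchwartzMap.seminorm ℝ k n (mkF hb hSB g x) ≤ D * jbr x ^ s := by
  obtain ⟨D, hD0, hD⟩ := key_pointwise hb hSB g k n
  refine ⟨D, hD0, fun x => ?_⟩
  exact SchwartzMap.seminorm_le_bound ℝ k n _
    (mul_nonneg hD0 (Real.rpow_pos_of_pos (jbr_pos x) s).le) (fun y => hD x y)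

/-! ### Fourier decay -/

lemma fourier_cont_bound (k : ℕ) :
    ∃ (sF : Finset (ℕ × ℕ)) (C : ℝ), 0 ≤ C ∧ ∀ f : SchwartzMap (E d) ℂ,
      SchwartzMap.seminorm ℝ k 0 (SchwartzMap.fourierTransformCLM ℝ f)
        ≤ C * (sF.sup (schwartzSeminormFamily ℝ (E d) ℂ)) f := by
  set T := SchwartzMap.fourierTransformCLM ℝ (V := E d) (E := ℂ)
  set q : Seminorm ℝ (SchwartzMap (E d) ℂ) :=
    (schwartzSeminormFamily ℝ (E d) ℂ (k, 0)).comp (T : SchwartzMap (E d) ℂ →ₗ[ℝ] _)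
  have hq : Continuous q := by
    have hp : Continuous (schwartzSeminormFamily ℝ (E d) ℂ (k, 0)) :=
      (schwartz_withSeminorms ℝ (E d) ℂ).continuous_seminorm (k, 0)
    exact hp.comp T.continuous
  obtain ⟨sF, C, hC, hle⟩ :=
    Seminorm.bound_of_continuous (schwartz_withSeminorms ℝ (E d) ℂ) q hq
  refine ⟨sF, C, C.coe_nonneg, fun f => ?_⟩
  have := hle f
  simp only [Seminorm.smul_apply, NNReal.smul_def, smul_eq_mul] at this
  exact this

lemma fourier_bound {b : E d → ℂ} (hb : ContDiff ℝ (⊤:ℕ∞) b) {s : ℝ} (hSB : SymB d b s)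
    (g : SchwartzMap (E d) ℂ) (k : ℕ) :
    ∃ C : ℝ, 0 ≤ C ∧ ∀ (x w : E d),
      ‖w‖ ^ k * ‖FourierTransform.fourier (⇑(mkF hb hSB g x)) w‖ ≤ C * jbr x ^ s := by
  obtain ⟨sF, C, hC0, hC⟩ := fourier_cont_bound (d := d) k
  have hmk := fun kn : ℕ × ℕ => mkF_seminorm_le hb hSB g kn.1 kn.2
  choose D hD0 hD using hmk
  set DD : ℝ := ∑ i ∈ sF, D i with hDD
  have hDD0 : 0 ≤ DD := Finset.sum_nonneg fun i _ => hD0 i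
  refine ⟨C * DD, mul_nonneg hC0 hDD0, fun x w => ?_⟩
  have hjx : (0:ℝ) < jbr x ^ s := Real.rpow_pos_of_pos (jbr_pos x) s
  have hsup : (sF.sup (schwartzSeminormFamily ℝ (E d) ℂ)) (mkF hb hSB g x)
      ≤ DD * jbr x ^ s := by
    apply Seminorm.finset_sup_apply_le (mul_nonneg hDD0 hjx.le)
    intro i hi
    calc schwartzSeminormFamily ℝ (E d) ℂ i (mkF hb hSB g x)
        = SchwartzMap.seminorm ℝ i.1 i.2 (mkF hb hSB g x) := rfl
      _ ≤ D i * jbr x ^ s := hD i x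
      _ ≤ DD * jbr x ^ s := by
          apply mul_le_mul_of_nonneg_right _ hjx.le
          exact Finset.single_le_sum (f := fun i => D i) (fun j _ => hD0 j) hi
  have hfT : FourierTransform.fourier (⇑(mkF hb hSB g x)) w
      = SchwartzMap.fourierTransformCLM ℝ (mkF hb hSB g x) w := by
    rw [SchwartzMap.fourierTransformCLM_apply, SchwartzMap.fourier_coe]
  rw [hfT]
  calc ‖w‖ ^ k * ‖SchwartzMap.fourierTransformCLM ℝ (mkF hb hSB g x) w‖
      ≤ SchwartzMap.seminorm ℝ k 0 (SchwartzMap.fourierTransformCLM ℝ (mkF hb hSB g x)) := by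
        have := SchwartzMap.le_seminorm ℝ k 0
          (SchwartzMap.fourierTransformCLM ℝ (mkF hb hSB g x)) w
        rwa [norm_iteratedFDeriv_zero] at this
    _ ≤ C * (sF.sup (schwartzSeminormFamily ℝ (E d) ℂ)) (mkF hb hSB g x) := hC _
    _ ≤ C * (DD * jbr x ^ s) := mul_le_mul_of_nonneg_left hsup hC0
    _ = C * DD * jbr x ^ s := by ring

lemma fourier_jbr_bound {b : E d → ℂ} (hb : ContDiff ℝ (⊤:ℕ∞) b) {s : ℝ} (hSB : SymB d b s)
    (g : SchwartzMap (E d) ℂ) (N : ℝ) (hN : 0 ≤ N) :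
    ∃ C : ℝ, 0 ≤ C ∧ ∀ (x w : E d),
      ‖FourierTransform.fourier (⇑(mkF hb hSB g x)) w‖ ≤ C * jbr x ^ s * jbr w ^ (-N) := by
  set k : ℕ := ⌈N⌉₊ with hk
  obtain ⟨C0, hC00, hC0⟩ := fourier_bound hb hSB g 0
  obtain ⟨Ck, hCk0, hCk⟩ := fourier_bound hb hSB g k
  refine ⟨2 ^ k * (C0 + Ck), by positivity, fun x w => ?_⟩
  have hjx : (0:ℝ) < jbr x ^ s := Real.rpow_pos_of_pos (jbr_pos x) s
  have hjwN : (0:ℝ) < jbr w ^ N := Real.rpow_pos_of_pos (jbr_pos w) N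
  set X : ℝ := ‖FourierTransform.fourier (⇑(mkF hb hSB g x)) w‖ with hX
  have hX0 : 0 ≤ X := norm_nonneg _
  have hb0 : X ≤ C0 * jbr x ^ s := by
    have := hC0 x w; simpa using this
  have hbk : ‖w‖ ^ k * X ≤ Ck * jbr x ^ s := hCk x w
  have hkey : jbr w ^ N * X ≤ 2 ^ k * (C0 + Ck) * jbr x ^ s := by
    have hw : jbr w ^ N ≤ 2 ^ k * (1 + ‖w‖ ^ k) :=
      (jbr_rpow_le_npow N w).trans (one_add_pow_le ‖w‖ (norm_nonneg w) k)
    calc jbr w ^ N * X ≤ (2 ^ k * (1 + ‖w‖ ^ k)) * X := mul_le_mul_of_nonneg_right hw hX0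
      _ = 2 ^ k * (X + ‖w‖ ^ k * X) := by ring
      _ ≤ 2 ^ k * (C0 * jbr x ^ s + Ck * jbr x ^ s) := by
          apply mul_le_mul_of_nonneg_left (add_le_add hb0 hbk) (by positivity)
      _ = 2 ^ k * (C0 + Ck) * jbr x ^ s := by ring
  rw [Real.rpow_neg (jbr_pos w).le]
  rw [show (2:ℝ) ^ k * (C0 + Ck) * jbr x ^ s * (jbr w ^ N)⁻¹
      = (2 ^ k * (C0 + Ck) * jbr x ^ s) / (jbr w ^ N) from by rw [div_eq_mul_inv]]
  rw [le_div_iff₀ hjwN]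
  calc X * jbr w ^ N = jbr w ^ N * X := by ring
    _ ≤ 2 ^ k * (C0 + Ck) * jbr x ^ s := hkey

/-! ### Differentiation under the integral sign -/

lemma norm_smul_fderiv_le {b : E d → ℂ} (hb : ContDiff ℝ (⊤:ℕ∞) b) {s : ℝ}
    {Bd : ℝ} (hBd : ∀ z, ‖fderiv ℝ b z‖ ≤ Bd * jbr z ^ s)
    (g : SchwartzMap (E d) ℂ) (K : E d → ℂ) (C₀ : ℝ) (hC₀ : 0 ≤ C₀)
    (hK : ∀ y, ‖K y‖ ≤ C₀ * ‖g y‖) (hBd0 : 0 ≤ Bd) (x : E d) :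
    ∀ (y x' : E d), x' ∈ Metric.ball x 1 →
      ‖K y • fderiv ℝ b (y + x')‖
        ≤ (C₀ * Bd * 2 ^ |s| * (2 + ‖x‖) ^ (⌈|s|⌉₊:ℕ))
            * ((1 + ‖y‖) ^ (⌈|s|⌉₊:ℕ) * ‖g y‖) := by
  intro y x' hx'
  have h2s : (0:ℝ) ≤ (2:ℝ) ^ |s| := (Real.rpow_pos_of_pos two_pos _).le
  have hx'n : ‖x'‖ ≤ ‖x‖ + 1 := by
    have := mem_ball_iff_norm.mp hx'
    calc ‖x'‖ = ‖x + (x' - x)‖ := by rw [show x + (x' - x) = x' from by abel]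
      _ ≤ ‖x‖ + ‖x' - x‖ := norm_add_le _ _
      _ ≤ ‖x‖ + 1 := by linarith
  have hjx' : jbr x' ^ s ≤ (2 + ‖x‖) ^ (⌈|s|⌉₊:ℕ) := by
    apply rpow_le_of_base_le (one_le_jbr x')
    calc jbr x' ≤ 1 + ‖x'‖ := jbr_le x'
      _ ≤ 2 + ‖x‖ := by linarith
  have hjy : jbr y ^ |s| ≤ (1 + ‖y‖) ^ (⌈|s|⌉₊:ℕ) := jbr_rpow_le_npow |s| y
  have hpe : jbr (y + x') ^ s ≤ 2 ^ |s| * (jbr x' ^ s * jbr y ^ |s|) := by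
    rw [add_comm]; exact jbr_peetre s x' y
  have hfd : ‖fderiv ℝ b (y + x')‖ ≤ Bd * (2 ^ |s| * (jbr x' ^ s * jbr y ^ |s|)) :=
    (hBd (y + x')).trans (mul_le_mul_of_nonneg_left hpe hBd0)
  have hKy : ‖K y‖ ≤ C₀ * ‖g y‖ := by exact hK y
  have h1 : (0:ℝ) < jbr x' ^ s := Real.rpow_pos_of_pos (jbr_pos x') s
  have h2 : (0:ℝ) < jbr y ^ |s| := Real.rpow_pos_of_pos (jbr_pos y) _
  have hgy : (0:ℝ) ≤ ‖g y‖ := norm_nonneg _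
  have hsm : ‖K y • fderiv ℝ b (y + x')‖ ≤ ‖K y‖ * ‖fderiv ℝ b (y + x')‖ := by
    apply ContinuousLinearMap.opNorm_le_bound _ (mul_nonneg (norm_nonneg _) (norm_nonneg _))
    intro v
    rw [ContinuousLinearMap.smul_apply, norm_smul]
    calc ‖K y‖ * ‖fderiv ℝ b (y + x') v‖
        ≤ ‖K y‖ * (‖fderiv ℝ b (y + x')‖ * ‖v‖) :=
          mul_le_mul_of_nonneg_left ((fderiv ℝ b (y + x')).le_opNorm v) (norm_nonneg _)
      _ = ‖K y‖ * ‖fderiv ℝ b (y + x')‖ * ‖v‖ := (mul_assoc _ _ _).symm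
  calc ‖K y • fderiv ℝ b (y + x')‖ ≤ ‖K y‖ * ‖fderiv ℝ b (y + x')‖ := hsm
    _ ≤ (C₀ * ‖g y‖) * (Bd * (2 ^ |s| * (jbr x' ^ s * jbr y ^ |s|))) := by
        apply mul_le_mul hKy hfd (norm_nonneg _) (mul_nonneg hC₀ hgy)
    _ = (C₀ * Bd * 2 ^ |s|) * (jbr x' ^ s * (jbr y ^ |s| * ‖g y‖)) := by ring
    _ ≤ (C₀ * Bd * 2 ^ |s|) * ((2 + ‖x‖) ^ (⌈|s|⌉₊:ℕ)
          * ((1 + ‖y‖) ^ (⌈|s|⌉₊:ℕ) * ‖g y‖)) := by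
        apply mul_le_mul_of_nonneg_left _ (mul_nonneg (mul_nonneg hC₀ hBd0) h2s)
        apply mul_le_mul hjx' (mul_le_mul_of_nonneg_right hjy hgy)
          (mul_nonneg h2.le hgy) (by positivity)
    _ = (C₀ * Bd * 2 ^ |s| * (2 + ‖x‖) ^ (⌈|s|⌉₊:ℕ))
          * ((1 + ‖y‖) ^ (⌈|s|⌉₊:ℕ) * ‖g y‖) := by ring

lemma step_hasFDeriv {b : E d → ℂ} (hb : ContDiff ℝ (⊤:ℕ∞) b) {s : ℝ} (hSB : SymB d b s)
    (g : SchwartzMap (E d) ℂ) (K : E d → ℂ) (hKc : Continuous K) (C₀ : ℝ) (hC₀ : 0 ≤ C₀)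
    (hK : ∀ y, ‖K y‖ ≤ C₀ * ‖g y‖) (x : E d) :
    HasFDerivAt (fun x' => ∫ y : E d, b (y + x') * K y)
      (∫ y : E d, K y • fderiv ℝ b (y + x)) x
    ∧ Integrable (fun y : E d => K y • fderiv ℝ b (y + x)) := by
  classical
  set p : ℕ := ⌈|s|⌉₊ with hp
  have h2s : (0:ℝ) ≤ (2:ℝ) ^ |s| := (Real.rpow_pos_of_pos two_pos _).le
  -- bound on fderiv b
  choose Cf hCf0 hCf using hSB
  set Bd : ℝ := ∑ i : Fin d, Cf [i] with hBdd
  have hBd0 : 0 ≤ Bd := Finset.sum_nonneg fun i _ => hCf0 _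
  have hBd : ∀ z, ‖fderiv ℝ b z‖ ≤ Bd * jbr z ^ s := by
    intro z
    refine (norm_fderiv_le_sum z).trans ?_
    have hjz : (0:ℝ) < jbr z ^ s := Real.rpow_pos_of_pos (jbr_pos z) s
    calc (∑ i : Fin d, ‖pd d i b z‖)
        ≤ ∑ i : Fin d, Cf [i] * jbr z ^ s := Finset.sum_le_sum fun i _ => hCf [i] z
      _ = Bd * jbr z ^ s := by rw [hBdd, Finset.sum_mul]
  have hball := norm_smul_fderiv_le hb hBd g K C₀ hC₀ hK hBd0 x
  -- measurability of the integrand family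
  have hmeas : ∀ x' : E d, AEStronglyMeasurable (fun y : E d => b (y + x') * K y) volume := by
    intro x'
    exact (((hb.continuous).comp (continuous_id.add continuous_const)).mul hKc).aestronglyMeasurable
  -- integrability of the integrand at any point
  have hint : ∀ x' : E d, Integrable (fun y : E d => b (y + x') * K y) := by
    intro x'
    apply integrable_of_poly_schwartz _ (hmeas x') g (Cf [] * jbr x' ^ s * 2 ^ |s| * C₀) p
    intro y
    have h1 : ‖b (y + x')‖ ≤ Cf [] * jbr (y + x') ^ s := hCf [] (y + x')
    have hpe : jbr (y + x') ^ s ≤ 2 ^ |s| * (jbr x' ^ s * jbr y ^ |s|) := by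
      rw [add_comm]; exact jbr_peetre s x' y
    have hjy : jbr y ^ |s| ≤ (1 + ‖y‖) ^ (p:ℕ) := jbr_rpow_le_npow |s| y
    have hjx' : (0:ℝ) < jbr x' ^ s := Real.rpow_pos_of_pos (jbr_pos x') s
    have hjy0 : (0:ℝ) < jbr y ^ |s| := Real.rpow_pos_of_pos (jbr_pos y) _
    calc ‖b (y + x') * K y‖ = ‖b (y + x')‖ * ‖K y‖ :=
          norm_mul _ _
      _ ≤ (Cf [] * jbr (y + x') ^ s) * (C₀ * ‖g y‖) := by
          apply mul_le_mul h1 (hK y) (norm_nonneg _)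
            (mul_nonneg (hCf0 []) (Real.rpow_pos_of_pos (jbr_pos _) s).le)
      _ ≤ (Cf [] * (2 ^ |s| * (jbr x' ^ s * jbr y ^ |s|))) * (C₀ * ‖g y‖) := by
          apply mul_le_mul_of_nonneg_right _ (mul_nonneg hC₀ (norm_nonneg _))
          exact mul_le_mul_of_nonneg_left hpe (hCf0 [])
      _ = (Cf [] * jbr x' ^ s * 2 ^ |s| * C₀) * (jbr y ^ |s| * ‖g y‖) := by ring
      _ ≤ (Cf [] * jbr x' ^ s * 2 ^ |s| * C₀) * ((1 + ‖y‖) ^ (p:ℕ) * ‖g y‖) := by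
          apply mul_le_mul_of_nonneg_left (mul_le_mul_of_nonneg_right hjy (norm_nonneg _))
          exact mul_nonneg (mul_nonneg (mul_nonneg (hCf0 []) hjx'.le) h2s) hC₀
  -- the derivative integrand and its properties
  have hfdc : Continuous (fun y : E d => K y • fderiv ℝ b (y + x)) := by
    have h1 : Continuous (fderiv ℝ b) :=
      (hb.fderiv_right (by exact_mod_cast le_top : ((⊤:ℕ∞) : WithTop ℕ∞) + 1 ≤ ((⊤:ℕ∞) : WithTop ℕ∞))).continuous
    exact hKc.smul (h1.comp (continuous_id.add continuous_const))
  have hF'int : Integrable (fun y : E d => K y • fderiv ℝ b (y + x)) := by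
    apply ((integrable_weight g p).const_mul
      (C₀ * Bd * 2 ^ |s| * (2 + ‖x‖) ^ (p:ℕ))).mono' hfdc.aestronglyMeasurable
    refine Filter.Eventually.of_forall fun y => ?_
    exact hball y x (Metric.mem_ball_self one_pos)
  constructor
  · apply hasFDerivAt_integral_of_dominated_of_fderiv_le (Metric.ball_mem_nhds x one_pos)
      (Filter.Eventually.of_forall fun x' => hmeas x') (hint x)
      hfdc.aestronglyMeasurable
      (Filter.Eventually.of_forall fun y => fun x' hx' => hball y x' hx')
      ((integrable_weight g p).const_mul _)
      (Filter.Eventually.of_forall fun y => fun x' _ =>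
        (hasFDerivAt_shift hb y x').mul_const (K y))
  · exact hF'int

lemma lemA {b : E d → ℂ} (hb : ContDiff ℝ (⊤:ℕ∞) b) {s : ℝ} (hSB : SymB d b s)
    (g : SchwartzMap (E d) ℂ) (K : E d → ℂ) (hKc : Continuous K) (C₀ : ℝ) (hC₀ : 0 ≤ C₀)
    (hK : ∀ y, ‖K y‖ ≤ C₀ * ‖g y‖) (c : ℂ) (α : List (Fin d)) :
    ∀ x : E d, pdL d α (fun x' => c * ∫ y : E d, b (y + x') * K y) x
      = c * ∫ y : E d, pdL d α b (y + x) * K y := by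
  induction α with
  | nil => intro x; rfl
  | cons i L ih =>
    intro x
    rw [pdL_cons]
    have hfun : pdL d L (fun x' => c * ∫ y : E d, b (y + x') * K y)
        = fun x' => c * ∫ y : E d, pdL d L b (y + x') * K y := funext fun x' => ih x'
    rw [hfun]
    have hb' : ContDiff ℝ (⊤:ℕ∞) (pdL d L b) := contDiff_pdL L hb
    have hSB' : SymB d (pdL d L b) s := hSB.pdL L
    obtain ⟨H, hInt⟩ := step_hasFDeriv hb' hSB' g K hKc C₀ hC₀ hK x
    have H2 : HasFDerivAt (fun x' => c * ∫ y : E d, pdL d L b (y + x') * K y)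
        (c • ∫ y : E d, K y • fderiv ℝ (pdL d L b) (y + x)) x := H.const_mul c
    show fderiv ℝ (fun x' => c * ∫ y : E d, pdL d L b (y + x') * K y) x
      (EuclideanSpace.single i 1) = _
    rw [H2.fderiv, ContinuousLinearMap.smul_apply,
      ContinuousLinearMap.integral_apply hInt]
    rw [show (∫ y : E d, (K y • fderiv ℝ (pdL d L b) (y + x)) (EuclideanSpace.single i 1))
        = ∫ y : E d, pdL d (i :: L) b (y + x) * K y from ?_]
    · rw [smul_eq_mul]
    · refine integral_congr_ae (Filter.Eventually.of_forall fun y => ?_)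
      show (K y • fderiv ℝ (pdL d L b) (y + x)) (EuclideanSpace.single i 1)
        = pdL d (i :: L) b (y + x) * K y
      rw [ContinuousLinearMap.smul_apply, smul_eq_mul, pdL_cons]
      rw [mul_comm]
      rfl

lemma Tg_eq (g : SchwartzMap (E d) ℂ) (a : E d → ℂ) (x ξ : E d) :
    Tg d (⇑g) a x ξ = (((2 * Real.pi) ^ (-(d : ℝ) / 2) : ℝ) : ℂ) *
      ∫ y : E d, a (y + x) *
        (Complex.exp (-Complex.I * ((⟪y, ξ⟫ : ℝ) : ℂ)) * (starRingEnd ℂ) (g y)) := by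
  rw [Tg]
  congr 1
  rw [← integral_add_right_eq_self (μ := volume)
    (fun y : E d => a y * Complex.exp (-Complex.I * ((⟪y - x, ξ⟫ : ℝ) : ℂ))
      * (starRingEnd ℂ) (g (y - x))) x]
  refine integral_congr_ae (Filter.Eventually.of_forall fun y => ?_)
  simp only [add_sub_cancel_right]
  ring

end ShubinAux

open ShubinAux in
/-- If `a` is a Shubin symbol of order `m`, parameter `ρ`, then for any nonzero
Schwartz window `g` the transform satisfies
`|∂_x^α 𝒯_g a(x,ξ)| ≤ C ⟨x⟩^{m-ρ|α|} ⟨ξ⟩^{-N}`. -/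
theorem shubin_symbol_Tg_estimate (d : ℕ) (m ρ : ℝ) (hρ0 : 0 ≤ ρ) (hρ1 : ρ ≤ 1)
    (a : E d → ℂ) (ha : ContDiff ℝ (⊤ : ℕ∞) a)
    (hsym : ∀ α : List (Fin d), ∃ C : ℝ, ∀ z : E d,
      ‖pdL d α a z‖ ≤ C * jbr z ^ (m - ρ * α.length))
    (g : SchwartzMap (E d) ℂ) (hg : g ≠ 0) :
    ∀ (α : List (Fin d)) (N : ℝ), 0 ≤ N → ∃ C : ℝ, 0 < C ∧ ∀ x ξ : E d,
      ‖pdL d α (fun x' => Tg d g a x' ξ) x‖ ≤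
        C * jbr x ^ (m - ρ * α.length) * jbr ξ ^ (-N) := by
  intro α N hN
  have ha' : ContDiff ℝ (⊤:ℕ∞) a := ha.of_le (by simp)
  have hb' : ContDiff ℝ (⊤:ℕ∞) (pdL d α a) := contDiff_pdL α ha'
  -- nonnegativity of the symbol constants
  have hCnn : ∀ (β : List (Fin d)) (C : ℝ),
      (∀ z, ‖pdL d β a z‖ ≤ C * jbr z ^ (m - ρ * β.length)) → 0 ≤ C := by
    intro β C hC
    have h := (norm_nonneg (pdL d β a 0)).trans (hC 0)
    have hp := Real.rpow_pos_of_pos (jbr_pos (0 : E d)) (m - ρ * β.length)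
    nlinarith
  -- SymB for `a` of order `m`
  have hSa : SymB d a m := by
    intro L
    obtain ⟨C, hC⟩ := hsym L
    have hC0 : 0 ≤ C := hCnn L C hC
    refine ⟨C, hC0, fun z => (hC z).trans ?_⟩
    apply mul_le_mul_of_nonneg_left _ hC0
    apply Real.rpow_le_rpow_of_exponent_le (one_le_jbr z)
    have : (0:ℝ) ≤ ρ * L.length := mul_nonneg hρ0 (Nat.cast_nonneg _)
    linarith
  -- SymB for `pdL α a` of order `m - ρ|α|`
  have hSα : SymB d (pdL d α a) (m - ρ * α.length) := by
    intro L
    obtain ⟨C, hC⟩ := hsym (L ++ α)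
    have hC0 : 0 ≤ C := hCnn _ C hC
    refine ⟨C, hC0, fun z => ?_⟩
    rw [← pdL_append]
    refine (hC z).trans ?_
    apply mul_le_mul_of_nonneg_left _ hC0
    apply Real.rpow_le_rpow_of_exponent_le (one_le_jbr z)
    have h1 : ((L ++ α).length : ℝ) = (L.length : ℝ) + (α.length : ℝ) := by
      push_cast [List.length_append]; ring
    have h2 : (0:ℝ) ≤ ρ * L.length := mul_nonneg hρ0 (Nat.cast_nonneg _)
    rw [h1]; nlinarith
  obtain ⟨CF, hCF0, hCF⟩ := fourier_jbr_bound hb' hSα g N hN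
  set c : ℂ := (((2 * Real.pi) ^ (-(d : ℝ) / 2) : ℝ) : ℂ) with hc
  have hpi : (0:ℝ) < 2 * Real.pi := by positivity
  have h2piN : (0:ℝ) < (2 * Real.pi) ^ N := Real.rpow_pos_of_pos hpi N
  have hCfin0 : 0 ≤ ‖c‖ * CF * (2 * Real.pi) ^ N :=
    mul_nonneg (mul_nonneg (norm_nonneg c) hCF0) h2piN.le
  refine ⟨‖c‖ * CF * (2 * Real.pi) ^ N + 1,
    by linarith, fun x ξ => ?_⟩
  -- kernel
  set K : E d → ℂ :=
    fun y => Complex.exp (-Complex.I * ((⟪y, ξ⟫ : ℝ) : ℂ)) * (starRingEnd ℂ) (g y) with hKdef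
  have hKc : Continuous K := by
    apply Continuous.mul
    · exact Complex.continuous_exp.comp (continuous_const.mul
        (Complex.continuous_ofReal.comp (continuous_id.inner continuous_const)))
    · exact Complex.conjCLE.continuous.comp g.continuous
  have hK : ∀ y, ‖K y‖ ≤ 1 * ‖g y‖ := by
    intro y
    rw [hKdef]
    simp only [norm_mul, Complex.norm_exp, Complex.norm_conj, one_mul]
    have : (-Complex.I * ((⟪y, ξ⟫ : ℝ) : ℂ)).re = 0 := by simp
    rw [this, Real.exp_zero, one_mul]
  have hTg : (fun x' => Tg d (⇑g) a x' ξ) = fun x' => c * ∫ y : E d, a (y + x') * K y :=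
    funext fun x' => Tg_eq g a x' ξ
  rw [hTg, lemA ha' hSa g K hKc 1 one_pos.le hK c α x, norm_mul]
  set w : E d := (2 * Real.pi)⁻¹ • ξ with hw
  have hIF : (∫ y : E d, pdL d α a (y + x) * K y)
      = FourierTransform.fourier (⇑(mkF hb' hSα g x)) w := by
    rw [Real.fourier_eq]
    refine integral_congr_ae (Filter.Eventually.of_forall fun y => ?_)
    show pdL d α a (y + x) * K y
      = Real.fourierChar (-(⟪y, w⟫ : ℝ)) • (mkF hb' hSα g x) y
    rw [Circle.smul_def, Real.fourierChar_apply, mkF_apply]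
    rw [hw, real_inner_smul_right]
    have harg : 2 * Real.pi * -((2 * Real.pi)⁻¹ * ⟪y, ξ⟫) = -⟪y, ξ⟫ := by
      field_simp
    rw [harg]
    rw [show ((-⟪y, ξ⟫ : ℝ) : ℂ) * Complex.I = -Complex.I * ((⟪y, ξ⟫ : ℝ) : ℂ) from by
      push_cast; ring]
    rw [hKdef, smul_eq_mul]
    ring
  rw [hIF]
  have h1 : ‖FourierTransform.fourier (⇑(mkF hb' hSα g x)) w‖
      ≤ CF * jbr x ^ (m - ρ * α.length) * jbr w ^ (-N) := by
    exact hCF x w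
  -- compare brackets of `w` and `ξ`
  have hξw : ξ = (2 * Real.pi) • w := by
    rw [hw, smul_smul, mul_inv_cancel₀ hpi.ne', one_smul]
  have hjle : (2 * Real.pi)⁻¹ * jbr ξ ≤ jbr w := by
    have hn : ‖ξ‖ = (2 * Real.pi) * ‖w‖ := by
      rw [hξw, norm_smul, Real.norm_eq_abs, _root_.abs_of_pos hpi]
    have hsq : 1 + ‖ξ‖ ^ 2 ≤ (2 * Real.pi) ^ 2 * (1 + ‖w‖ ^ 2) := by
      rw [hn]
      nlinarith [Real.pi_gt_three, norm_nonneg w]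
    have : jbr ξ ≤ (2 * Real.pi) * jbr w := by
      rw [jbr, jbr]
      calc Real.sqrt (1 + ‖ξ‖ ^ 2) ≤ Real.sqrt ((2 * Real.pi) ^ 2 * (1 + ‖w‖ ^ 2)) :=
            Real.sqrt_le_sqrt hsq
        _ = (2 * Real.pi) * Real.sqrt (1 + ‖w‖ ^ 2) := by
            rw [Real.sqrt_mul (sq_nonneg _), Real.sqrt_sq hpi.le]
    calc (2 * Real.pi)⁻¹ * jbr ξ ≤ (2 * Real.pi)⁻¹ * ((2 * Real.pi) * jbr w) := by
          apply mul_le_mul_of_nonneg_left this (by positivity)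
      _ = jbr w := by field_simp
  have h2 : jbr w ^ (-N) ≤ (2 * Real.pi) ^ N * jbr ξ ^ (-N) := by
    have hx0 : (0:ℝ) < (2 * Real.pi)⁻¹ * jbr ξ := by
      have := jbr_pos ξ; positivity
    have := Real.rpow_le_rpow_of_nonpos hx0 hjle (neg_nonpos.mpr hN)
    calc jbr w ^ (-N) ≤ ((2 * Real.pi)⁻¹ * jbr ξ) ^ (-N) := this
      _ = ((2 * Real.pi)⁻¹) ^ (-N) * jbr ξ ^ (-N) :=
          Real.mul_rpow (by positivity) (jbr_pos ξ).le
      _ = (2 * Real.pi) ^ N * jbr ξ ^ (-N) := by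
          rw [Real.inv_rpow hpi.le, Real.rpow_neg hpi.le, inv_inv]
  have hjx : (0:ℝ) < jbr x ^ (m - ρ * α.length) :=
    Real.rpow_pos_of_pos (jbr_pos x) _
  have hjξ : (0:ℝ) < jbr ξ ^ (-N) := Real.rpow_pos_of_pos (jbr_pos ξ) _
  calc ‖c‖ * ‖FourierTransform.fourier (⇑(mkF hb' hSα g x)) w‖
      ≤ ‖c‖ * (CF * jbr x ^ (m - ρ * α.length) * jbr w ^ (-N)) :=
        mul_le_mul_of_nonneg_left h1 (norm_nonneg c)
    _ ≤ ‖c‖ * (CF * jbr x ^ (m - ρ * α.length)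
          * ((2 * Real.pi) ^ N * jbr ξ ^ (-N))) := by
        apply mul_le_mul_of_nonneg_left _ (norm_nonneg c)
        apply mul_le_mul_of_nonneg_left h2
        exact mul_nonneg hCF0 hjx.le
    _ = (‖c‖ * CF * (2 * Real.pi) ^ N) * jbr x ^ (m - ρ * α.length)
          * jbr ξ ^ (-N) := by ring
    _ ≤ (‖c‖ * CF * (2 * Real.pi) ^ N + 1) * jbr x ^ (m - ρ * α.length)
          * jbr ξ ^ (-N) := by
        apply mul_le_mul_of_nonneg_right _ hjξ.le
        apply mul_le_mul_of_nonneg_right _ hjx.le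
        linarith
end
end

section
/- The radial vector field R a(x) = ⟨x, ∇a(x)⟩ satisfies, for a ∈ 𝒮(ℝ^d) and g ∈ 𝒮(ℝ^d), the intertwining relation 𝒯_g(Ra)(x,ξ) = ⟨x + i∇_ξ, ∇_x⟩ 𝒯_g a(x,ξ), i.e. 𝒯_g(Ra)(x,ξ) = Σ_{j=1}^d (x_j ∂_{x_j} + i ∂_{ξ_j} ∂_{x_j}) 𝒯_g a(x,ξ). -/
noncomputable section
open MeasureTheory Complex
open scoped RealInnerProductSpace BigOperators

/-!
Substituting `y = z + x` gives `𝒯_g a(x,ξ) = c ∫ a(z + x) e^{-i⟨z,ξ⟩} conj(g z) dz`, in which `x`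
only enters through `a` and `ξ` only through the exponential. Differentiating under the integral
sign therefore gives `∂_{x_j} 𝒯_g a = 𝒯_g (∂_j a)` and `∂_{ξ_j} 𝒯_g b = i 𝒯_{g_j} b` with
`g_j(y) = -y_j g(y)`. With `b = ∂_j a`, the `j`-th summand on the right is thus
`x_j 𝒯_g b + i · i 𝒯_{g_j} b = x_j 𝒯_g b - 𝒯_{g_j} b`, which is `𝒯_g (y_j b)` because
`conj (g_j (y - x)) = (x_j - y_j) conj (g (y - x))`; summing over `j` uses linearity of `𝒯_g`.
-/

open scoped SchwartzMap ComplexConjugate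
open LineDeriv

theorem norm_cexp_neg_I_mul_ofReal (r : ℝ) : ‖cexp (-I * r)‖ = 1 := by
  simp [norm_exp]

theorem SchwartzMap.exists_norm_le {V F : Type*} [NormedAddCommGroup V] [NormedSpace ℝ V]
    [NormedAddCommGroup F] [NormedSpace ℝ F] (f : 𝓢(V, F)) : ∃ C, ∀ x, ‖f x‖ ≤ C :=
  ⟨_, f.toBoundedContinuousFunction.norm_coe_le_norm⟩

theorem fderiv_const_mul_integral_apply {P α : Type*} [NormedAddCommGroup P] [NormedSpace ℝ P]
    [MeasurableSpace α] {μ : Measure α} {F : P → α → ℂ} {F' : P → α → P →L[ℝ] ℂ}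
    {bound : α → ℝ} (c : ℂ) {p₀ : P} (hF_meas : ∀ p, AEStronglyMeasurable (F p) μ)
    (hF_int : Integrable (F p₀) μ) (hF'_meas : AEStronglyMeasurable (F' p₀) μ)
    (h_bound : ∀ p y, ‖F' p y‖ ≤ bound y) (hbound : Integrable bound μ)
    (h_diff : ∀ p y, HasFDerivAt (F · y) (F' p y) p) (v : P) :
    fderiv ℝ (fun p => c * ∫ y, F p y ∂μ) p₀ v = c * ∫ y, F' p₀ y v ∂μ := by
  have hF'_int : Integrable (F' p₀) μ := hbound.mono' hF'_meas (.of_forall (h_bound p₀))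
  have hD := (hasFDerivAt_integral_of_dominated_of_fderiv_le Filter.univ_mem
    (.of_forall hF_meas) hF_int hF'_meas (.of_forall fun y p _ => h_bound p y) hbound
    (.of_forall fun y p _ => h_diff p y)).const_mul c
  rw [hD.fderiv, smul_apply, ContinuousLinearMap.integral_apply hF'_int,
    smul_eq_mul]

section InnerProductSpace

variable {V : Type*} [NormedAddCommGroup V] [InnerProductSpace ℝ V]

theorem hasFDerivAt_cexp_neg_I_inner (z ξ : V) :
    HasFDerivAt (fun ξ' : V => cexp (-I * ⟪z, ξ'⟫))
      (cexp (-I * ⟪z, ξ⟫) • (-I) • (ofRealCLM ∘L innerSL ℝ z)) ξ := by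
  have hL : HasFDerivAt (fun ξ' : V => -I * ⟪z, ξ'⟫) ((-I) • (ofRealCLM ∘L innerSL ℝ z)) ξ := by
    convert ((-I) • (ofRealCLM ∘L innerSL ℝ z)).hasFDerivAt using 1
    ext ξ'
    simp
  exact hL.cexp

theorem norm_neg_I_smul_ofRealCLM_comp_innerSL_le (z : V) :
    ‖(-I) • (ofRealCLM ∘L innerSL ℝ z)‖ ≤ ‖z‖ := by
  rw [norm_smul, norm_neg, norm_I, one_mul]
  calc ‖ofRealCLM ∘L innerSL ℝ z‖ ≤ ‖ofRealCLM‖ * ‖innerSL ℝ z‖ :=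
        ContinuousLinearMap.opNorm_comp_le _ _
    _ = ‖z‖ := by rw [ofRealCLM_norm, innerSL_apply_norm, one_mul]

variable [MeasurableSpace V] [BorelSpace V] {μ : Measure V}

theorem integrable_mul_cexp_mul_conj {v h : V → ℂ} (hv : AEStronglyMeasurable v μ)
    (hv_bdd : ∃ C, ∀ z, ‖v z‖ ≤ C) (hh : Integrable h μ) (ξ : V) :
    Integrable (fun z => v z * cexp (-I * ⟪z, ξ⟫) * conj (h z)) μ := by
  obtain ⟨C, hC⟩ := hv_bdd
  have hconj : Integrable (fun z => conj (h z)) μ :=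
    conjCLE.toContinuousLinearMap.integrable_comp hh
  refine hconj.bdd_mul (c := C) (hv.mul (by fun_prop : Continuous _).aestronglyMeasurable)
    (.of_forall fun z => ?_)
  rw [norm_mul, norm_cexp_neg_I_mul_ofReal, mul_one]
  exact hC z

end InnerProductSpace

section Transform

variable {d : ℕ}

def negCoordMul (j : Fin d) (g : E d → ℂ) : E d → ℂ := fun y => -(y j : ℂ) * g y

theorem integrable_negCoordMul {g : E d → ℂ} (hg : AEStronglyMeasurable g)
    (hg' : Integrable fun z => ‖z‖ * ‖g z‖) (j : Fin d) : Integrable (negCoordMul j g) := by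
  have hcoord : Continuous fun y : E d => -(y j : ℂ) := by fun_prop
  refine hg'.mono' (hcoord.aestronglyMeasurable.mul hg) (.of_forall fun z => ?_)
  rw [negCoordMul, norm_mul, norm_neg, norm_real]
  gcongr
  exact PiLp.norm_apply_le z j

theorem SchwartzMap.exists_norm_coord_mul_le (b : 𝓢(E d, ℂ)) (j : Fin d) :
    ∃ C, ∀ y : E d, ‖(y j : ℂ) * b y‖ ≤ C := by
  obtain ⟨C, -, hC⟩ := b.decay 1 0
  refine ⟨C, fun y => ?_⟩
  rw [norm_mul, norm_real]
  calc ‖y j‖ * ‖b y‖ ≤ ‖y‖ * ‖b y‖ := by gcongr; exact PiLp.norm_apply_le y j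
    _ ≤ C := by simpa using hC y

theorem SchwartzMap.pd_eq_lineDerivOp (a : 𝓢(E d, ℂ)) (j : Fin d) :
    pd d j a = ⇑(∂_{(EuclideanSpace.single j 1 : E d)} a : 𝓢(E d, ℂ)) :=
  rfl

theorem Tg_eq_integral_add (g u : E d → ℂ) (x ξ : E d) :
    Tg d g u x ξ = (((2 * Real.pi) ^ (-(d : ℝ) / 2) : ℝ) : ℂ) *
      ∫ z, u (z + x) * cexp (-I * ⟪z, ξ⟫) * conj (g z) := by
  rw [Tg, ← integral_add_right_eq_self _ x]
  simp only [add_sub_cancel_right]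

theorem integrable_Tg_integrand {u g : E d → ℂ} (hu : Continuous u) (hu_bdd : ∃ C, ∀ y, ‖u y‖ ≤ C)
    (hg : Integrable g) (x ξ : E d) :
    Integrable fun y => u y * cexp (-I * ((⟪y - x, ξ⟫ : ℝ) : ℂ)) * conj (g (y - x)) := by
  obtain ⟨C, hC⟩ := hu_bdd
  have := (integrable_mul_cexp_mul_conj (hu.comp (continuous_add_const x)).aestronglyMeasurable
    ⟨C, fun z => hC (z + x)⟩ hg ξ).comp_sub_right x
  simpa only [Function.comp_def, sub_add_cancel] using this

theorem Tg_finset_sum {ι : Type*} (s : Finset ι) {u : ι → E d → ℂ} {g : E d → ℂ}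
    (hu : ∀ i ∈ s, Continuous (u i)) (hu_bdd : ∀ i ∈ s, ∃ C, ∀ y, ‖u i y‖ ≤ C)
    (hg : Integrable g) (x ξ : E d) :
    Tg d g (fun y => ∑ i ∈ s, u i y) x ξ = ∑ i ∈ s, Tg d g (u i) x ξ := by
  simp only [Tg, Finset.sum_mul, ← Finset.mul_sum]
  rw [integral_finsetSum s fun i hi => integrable_Tg_integrand (hu i hi) (hu_bdd i hi) hg x ξ]

theorem Tg_coord_mul {u g : E d → ℂ} (hu : Continuous u) (hu_bdd : ∃ C, ∀ y, ‖u y‖ ≤ C)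
    (hg : Integrable g) (j : Fin d) (hgj : Integrable (negCoordMul j g)) (x ξ : E d) :
    Tg d g (fun y => (y j : ℂ) * u y) x ξ =
      (x j : ℂ) * Tg d g u x ξ - Tg d (negCoordMul j g) u x ξ := by
  simp only [Tg]
  rw [mul_left_comm, ← mul_sub]
  congr 1
  rw [← integral_const_mul, ← integral_sub ((integrable_Tg_integrand hu hu_bdd hg x ξ).const_mul _)
    (integrable_Tg_integrand hu hu_bdd hgj x ξ)]
  refine integral_congr_ae (.of_forall fun y => ?_)
  simp only [negCoordMul, PiLp.sub_apply, ofReal_sub, map_mul, map_neg, map_sub, conj_ofReal]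
  ring

theorem pd_Tg_fst (a : 𝓢(E d, ℂ)) {g : E d → ℂ} (hg : Integrable g) (j : Fin d) (x ξ : E d) :
    pd d j (fun x' => Tg d g a x' ξ) x = Tg d g (pd d j a) x ξ := by
  obtain ⟨C, hC⟩ := a.exists_norm_le
  obtain ⟨M, hM⟩ := (SchwartzMap.fderivCLM ℝ (E d) ℂ a).exists_norm_le
  have ha : ∀ x', Integrable fun z => a (z + x') * cexp (-I * ⟪z, ξ⟫) * conj (g z) := fun x' =>
    integrable_mul_cexp_mul_conj (a.continuous.comp (continuous_add_const x')).aestronglyMeasurable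
      ⟨C, fun z => hC (z + x')⟩ hg ξ
  simp only [pd, Tg_eq_integral_add]
  rw [fderiv_const_mul_integral_apply (bound := fun z => ‖g z‖ * M)
    (F' := fun x' z => conj (g z) • cexp (-I * ⟪z, ξ⟫) • fderiv ℝ a (z + x'))]
  · congr 1
    refine integral_congr_ae (.of_forall fun z => ?_)
    simp only [smul_apply, smul_eq_mul]
    ring
  · exact fun x' => (ha x').aestronglyMeasurable
  · exact ha x
  · exact (conjCLE.continuous.comp_aestronglyMeasurable hg.aestronglyMeasurable).smul
      ((by fun_prop : Continuous fun z : E d => cexp (-I * ⟪z, ξ⟫)).smul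
      ((SchwartzMap.fderivCLM ℝ (E d) ℂ a).continuous.comp
        (continuous_add_const x))).aestronglyMeasurable
  · intro x' z
    rw [norm_smul, norm_smul, norm_cexp_neg_I_mul_ofReal, one_mul, RCLike.norm_conj]
    exact mul_le_mul_of_nonneg_left (hM (z + x')) (norm_nonneg _)
  · exact hg.norm.mul_const M
  · intro x' z
    exact (((hasFDerivAt_comp_add_left z).2 (a.hasFDerivAt (z + x'))).mul_const _).mul_const _

theorem pd_Tg_snd {u g : E d → ℂ} (hu : Continuous u) (hu_bdd : ∃ C, ∀ y, ‖u y‖ ≤ C)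
    (hg : Integrable g) (hg' : Integrable fun z => ‖z‖ * ‖g z‖) (j : Fin d) (x ξ : E d) :
    pd d j (fun ξ' => Tg d g u x ξ') ξ = I * Tg d (negCoordMul j g) u x ξ := by
  obtain ⟨C, hC⟩ := hu_bdd
  have hux : Continuous fun z => u (z + x) := hu.comp (continuous_add_const x)
  have hint : ∀ ξ', Integrable fun z => u (z + x) * cexp (-I * ⟪z, ξ'⟫) * conj (g z) := fun ξ' =>
    integrable_mul_cexp_mul_conj hux.aestronglyMeasurable ⟨C, fun z => hC (z + x)⟩ hg ξ'
  simp only [pd, Tg_eq_integral_add]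
  rw [fderiv_const_mul_integral_apply (bound := fun z => C * (‖z‖ * ‖g z‖))
    (F' := fun ξ' (z : E d) =>
      conj (g z) • u (z + x) • cexp (-I * ⟪z, ξ'⟫) • (-I) • (ofRealCLM ∘L innerSL ℝ z))]
  · rw [mul_left_comm I]
    congr 1
    rw [← integral_const_mul]
    refine integral_congr_ae (.of_forall fun z => ?_)
    simp only [smul_apply, smul_eq_mul, negCoordMul, ContinuousLinearMap.comp_apply,
      innerSL_apply_apply, ofRealCLM_apply, EuclideanSpace.inner_single_right, one_mul,
      conj_trivial, map_mul, map_neg, conj_ofReal]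
    ring
  · exact fun ξ' => (hint ξ').aestronglyMeasurable
  · exact hint ξ
  · have hcont : Continuous fun z : E d =>
        u (z + x) • cexp (-I * ⟪z, ξ⟫) • (-I) • (ofRealCLM ∘L innerSL ℝ z) :=
      hux.smul (by fun_prop)
    exact (conjCLE.continuous.comp_aestronglyMeasurable hg.aestronglyMeasurable).smul
      hcont.aestronglyMeasurable
  · intro ξ' z
    rw [norm_smul, norm_smul, norm_smul, norm_cexp_neg_I_mul_ofReal, one_mul, RCLike.norm_conj]
    calc ‖g z‖ * (‖u (z + x)‖ * ‖(-I) • (ofRealCLM ∘L innerSL ℝ z)‖) ≤ ‖g z‖ * (C * ‖z‖) := by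
          gcongr
          · exact (norm_nonneg _).trans (hC 0)
          · exact hC (z + x)
          · exact norm_neg_I_smul_ofRealCLM_comp_innerSL_le z
      _ = C * (‖z‖ * ‖g z‖) := by ring
  · exact hg'.const_mul C
  · intro ξ' z
    exact ((hasFDerivAt_cexp_neg_I_inner z ξ').const_mul (u (z + x))).mul_const (conj (g z))

end Transform

/-- Intertwining of the radial vector field `Ra(y) = ⟨y,∇a(y)⟩` with the
transform: `𝒯_g(Ra)(x,ξ) = Σ_j (x_j ∂_{x_j} + i ∂_{ξ_j}∂_{x_j}) 𝒯_g a(x,ξ)`. -/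
theorem Tg_radial_vector_field (d : ℕ) (a g : SchwartzMap (E d) ℂ) (x ξ : E d) :
    Tg d g (fun y => ∑ j : Fin d, ((y j : ℝ) : ℂ) * pd d j a y) x ξ =
      ∑ j : Fin d,
        (((x j : ℝ) : ℂ) * pd d j (fun x' => Tg d g a x' ξ) x +
          Complex.I * pd d j (fun ξ' => pd d j (fun x' => Tg d g a x' ξ') x) ξ) := by
  have hg' : Integrable fun z : E d => ‖z‖ * ‖g z‖ := by
    simpa using g.integrable_pow_mul volume 1
  have hb (j : Fin d) : Continuous (pd d j a) := a.pd_eq_lineDerivOp j ▸ SchwartzMap.continuous _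
  have hb_bdd (j : Fin d) : ∃ C, ∀ y, ‖pd d j a y‖ ≤ C :=
    a.pd_eq_lineDerivOp j ▸ SchwartzMap.exists_norm_le _
  have hRa_bdd (j : Fin d) : ∃ C, ∀ y : E d, ‖(y j : ℂ) * pd d j a y‖ ≤ C :=
    a.pd_eq_lineDerivOp j ▸ SchwartzMap.exists_norm_coord_mul_le _ j
  have hRa (j : Fin d) : Continuous fun y : E d => (y j : ℂ) * pd d j a y :=
    (by fun_prop : Continuous fun y : E d => (y j : ℂ)).mul (hb j)
  rw [Tg_finset_sum _ (fun j _ => hRa j) (fun j _ => hRa_bdd j) g.integrable]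
  refine Finset.sum_congr rfl fun j _ => ?_
  have hξ : (fun ξ' => pd d j (fun x' => Tg d g a x' ξ') x) = fun ξ' => Tg d g (pd d j a) x ξ' :=
    funext fun ξ' => pd_Tg_fst a g.integrable j x ξ'
  rw [Tg_coord_mul (hb j) (hb_bdd j) g.integrable j
      (integrable_negCoordMul g.integrable.aestronglyMeasurable hg' j),
    pd_Tg_fst a g.integrable, hξ, pd_Tg_snd (hb j) (hb_bdd j) g.integrable hg']
  linear_combination (-Tg d (negCoordMul j g) (pd d j a) x ξ) * I_sq
end
end
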